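/- Let λ ∈ ℤπ be self-conjugate (conj(λ) = λ) with the property that for every g ∈ π of order exactly 2 the coefficient of g in λ is even, and suppose λ lies in the two-sided ideal I generated by {h − 1 : h ∈ G} for a normal subgroup G of π. Then λ is a ℤ-linear combination of elements of the form g₁(h−1)g₂ + g₂⁻¹(h⁻¹−1)g₁⁻¹ with g₁, g₂ ∈ π and h ∈ G. -/

import Mathlib

/-!
Since `λ` lies in the kernel of `ℤπ → ℤ[π/G]`, its coefficients on each coset of `G` sum to zero,
so if `λ ≠ 0` there are `a`, `b` in one coset with `λ_a > 0 > λ_b`. The norm-like element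
`b(b⁻¹a - 1) + (a⁻¹b - 1)b⁻¹` is `(a + a⁻¹) - (b + b⁻¹)`, and subtracting it from `λ` keeps `λ`
self-conjugate, even at involutions and in the kernel, while strictly decreasing `∑ |λ_g|`:
self-conjugacy gives `λ_{a⁻¹} = λ_a`, and evenness ensures that for an involution `a ≠ 1` the
`2` subtracted at `a` does not overshoot. Induction on `∑ |λ_g|` finishes the proof.
-/

/-- The involution on ℤπ induced by g ↦ g⁻¹, extended ℤ-linearly. -/
noncomputable def GRconj {π : Type} [Group π] (x : MonoidAlgebra ℤ π) : MonoidAlgebra ℤ π :=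
  MonoidAlgebra.ofCoeff (Finsupp.mapDomain (fun g : π => g⁻¹) x.coeff)

namespace Finsupp

variable {α β : Type*}

def l1Norm (f : α →₀ ℤ) : ℕ := f.sum fun _ n => n.natAbs

theorem l1Norm_neg (f : α →₀ ℤ) : l1Norm (-f) = l1Norm f := by
  simp [l1Norm, sum_neg_index]

theorem l1Norm_add_single (f : α →₀ ℤ) (x : α) (n : ℤ) :
    l1Norm (f + single x n) + (f x).natAbs = l1Norm f + (f x + n).natAbs := by
  classical
  have hsub : (f + single x n).support ⊆ insert x f.support :=
    support_add.trans (Finset.union_subset (Finset.subset_insert _ _)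
      (support_single_subset.trans (by simp)))
  unfold l1Norm
  rw [sum_of_support_subset _ hsub _ (fun _ _ => rfl),
    sum_of_support_subset _ (Finset.subset_insert x f.support) _ (fun _ _ => rfl),
    ← Finset.add_sum_erase _ _ (Finset.mem_insert_self _ _),
    ← Finset.add_sum_erase _ (fun y => (f y).natAbs) (Finset.mem_insert_self _ _),
    Finset.sum_congr rfl (g := fun y => (f y).natAbs) fun y hy => by
      rw [add_apply, single_eq_of_ne (Finset.ne_of_mem_erase hy), add_zero]]
  simp only [add_apply, single_eq_same]
  omega

theorem exists_neg_of_mapDomain_eq_zero {f : α →₀ ℤ} {φ : α → β} (hf : f.mapDomain φ = 0) {a : α}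
    (ha : 0 < f a) : ∃ b, φ b = φ a ∧ f b < 0 := by
  classical
  by_contra! hnonneg
  have hsum := mapDomain_apply_eq_sum φ f (a := a)
  rw [hf, zero_apply] at hsum
  have : f a ≤ ∑ i ∈ f.support with φ i = φ a, f i :=
    Finset.single_le_sum (fun i hi => hnonneg i (Finset.mem_filter.mp hi).2)
      (Finset.mem_filter.mpr ⟨mem_support_iff.mpr ha.ne', rfl⟩)
  omega

end Finsupp

open MonoidAlgebra

namespace NormLike

variable {π : Type*} [Group π]

noncomputable def invPair (x : π) : MonoidAlgebra ℤ π := single x 1 + single x⁻¹ 1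

noncomputable def normLikeSpan (G : Subgroup π) : AddSubgroup (MonoidAlgebra ℤ π) :=
  AddSubgroup.closure {x : MonoidAlgebra ℤ π | ∃ (g₁ g₂ : π) (h : π), h ∈ G ∧
    x = of ℤ π g₁ * (of ℤ π h - 1) * of ℤ π g₂ + of ℤ π g₂⁻¹ * (of ℤ π h⁻¹ - 1) * of ℤ π g₁⁻¹}

variable (π) in
def selfConjEven : AddSubgroup (MonoidAlgebra ℤ π) where
  carrier := {f | (∀ g, f.coeff g⁻¹ = f.coeff g) ∧ ∀ g : π, g ^ 2 = 1 → g ≠ 1 → Even (f.coeff g)}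
  zero_mem' := ⟨fun _ => rfl, fun _ _ _ => Even.zero⟩
  add_mem' := fun {f f'} hf hf' =>
    ⟨fun g => by simp only [coeff_add, Finsupp.add_apply, hf.1 g, hf'.1 g],
      fun g hg hg1 => by
        simpa only [coeff_add, Finsupp.add_apply] using (hf.2 g hg hg1).add (hf'.2 g hg hg1)⟩
  neg_mem' := fun {f} hf =>
    ⟨fun g => by simp only [coeff_neg, Finsupp.neg_apply, hf.1 g],
      fun g hg hg1 => by simpa only [coeff_neg, Finsupp.neg_apply] using (hf.2 g hg hg1).neg⟩

noncomputable def relAugKer (G : Subgroup π) [G.Normal] : AddSubgroup (MonoidAlgebra ℤ π) :=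
  (mapDomainRingHom ℤ (QuotientGroup.mk' G)).toAddMonoidHom.ker

theorem invPair_mem_selfConjEven (a : π) : invPair a ∈ selfConjEven π := by
  classical
  have hcoeff (g : π) :
      (invPair a).coeff g = (if a = g then 1 else 0) + if a = g⁻¹ then 1 else 0 := by
    simp only [invPair, coeff_add, coeff_single, Finsupp.add_apply, Finsupp.single_apply,
      inv_eq_iff_eq_inv]
  refine ⟨fun g => ?_, fun g hg _ => ?_⟩
  · rw [hcoeff, hcoeff, inv_inv, add_comm]
  · have hinv : g⁻¹ = g := inv_eq_of_mul_eq_one_right (by rwa [← sq])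
    exact ⟨_, by rw [hcoeff, hinv]⟩

theorem coeff_invPair_of_ne {a g : π} (h₁ : a ≠ g) (h₂ : a⁻¹ ≠ g) : (invPair a).coeff g = 0 := by
  simp [invPair, coeff_add, coeff_single, h₁, h₂]

theorem invPair_sub_invPair_mem_normLikeSpan (G : Subgroup π) {a b : π} (h : b⁻¹ * a ∈ G) :
    invPair a - invPair b ∈ normLikeSpan G := by
  refine AddSubgroup.subset_closure ⟨b, 1, b⁻¹ * a, h, ?_⟩
  simp only [invPair, of_apply, one_def, sub_mul, mul_sub, one_mul, mul_one,
    single_mul_single, mul_inv_rev, inv_inv, inv_one, mul_inv_cancel_left, mul_inv_cancel_right]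
  abel

theorem l1Norm_sub_invPair {f : MonoidAlgebra ℤ π} (hf : f ∈ selfConjEven π) {a : π}
    (ha : 0 < f.coeff a) :
    (f - invPair a).coeff.l1Norm ≤ f.coeff.l1Norm ∧
      (a ≠ 1 → (f - invPair a).coeff.l1Norm < f.coeff.l1Norm) := by
  set f₁ := f.coeff + Finsupp.single a (-1)
  have hcoeff : (f - invPair a).coeff = f₁ + Finsupp.single a⁻¹ (-1) := by
    simp only [f₁, invPair, coeff_sub, coeff_add, coeff_single, Finsupp.single_neg]
    abel
  have h₁ : f₁.l1Norm + (f.coeff a).natAbs = f.coeff.l1Norm + (f.coeff a + -1).natAbs :=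
    Finsupp.l1Norm_add_single f.coeff a (-1)
  have h₂ := Finsupp.l1Norm_add_single f₁ a⁻¹ (-1)
  rw [← hcoeff] at h₂
  by_cases hinv : a⁻¹ = a
  · have hf₁ : f₁ a⁻¹ = f.coeff a - 1 := by simp [f₁, hinv, sub_eq_add_neg]
    rw [hf₁] at h₂
    by_cases ha1 : a = 1
    · exact ⟨by omega, fun h => absurd ha1 h⟩
    · obtain ⟨k, hk⟩ := hf.2 a (by rw [sq]; exact inv_eq_iff_mul_eq_one.mp hinv) ha1
      omega
  · have hf₁ : f₁ a⁻¹ = f.coeff a := by simp [f₁, Ne.symm hinv, hf.1 a]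
    rw [hf₁] at h₂
    omega

theorem coeff_inv_eq_of_GRconj_eq {π : Type} [Group π] {f : MonoidAlgebra ℤ π} (hf : GRconj f = f)
    (g : π) : f.coeff g⁻¹ = f.coeff g :=
  calc f.coeff g⁻¹ = (GRconj f).coeff g⁻¹ := by rw [hf]
    _ = f.coeff g := Finsupp.mapDomain_apply inv_injective _ g

section Descent

variable (G : Subgroup π) [G.Normal]

theorem mem_relAugKer_iff {f : MonoidAlgebra ℤ π} :
    f ∈ relAugKer G ↔ f.coeff.mapDomain (QuotientGroup.mk' G) = 0 := by
  rw [relAugKer, AddMonoidHom.mem_ker, ← coeff_eq_zero]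
  rfl

theorem closure_le_relAugKer :
    AddSubgroup.closure {x : MonoidAlgebra ℤ π | ∃ (g₁ g₂ : π) (h : π), h ∈ G ∧
      x = of ℤ π g₁ * (of ℤ π h - 1) * of ℤ π g₂} ≤ relAugKer G := by
  refine (AddSubgroup.closure_le _).mpr ?_
  rintro _ ⟨g₁, g₂, h, hh, rfl⟩
  have hh1 : mapDomainRingHom ℤ (QuotientGroup.mk' G) (of ℤ π h) = 1 := by
    rw [mapDomainRingHom_apply, of_apply, mapDomain_single, QuotientGroup.mk'_apply,
      (QuotientGroup.eq_one_iff h).mpr hh, one_def]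
  rw [SetLike.mem_coe, relAugKer, AddMonoidHom.mem_ker, RingHom.toAddMonoidHom_eq_coe,
    AddMonoidHom.coe_coe, map_mul, map_mul, map_sub, hh1, map_one, sub_self, mul_zero, zero_mul]

theorem invPair_sub_invPair_mem_relAugKer {a b : π} (h : (a : π ⧸ G) = b) :
    invPair a - invPair b ∈ relAugKer G := by
  have h' : ((a⁻¹ : π) : π ⧸ G) = (b⁻¹ : π) := by simpa using congrArg (·⁻¹) h
  rw [relAugKer, AddMonoidHom.mem_ker]
  simp only [invPair, RingHom.toAddMonoidHom_eq_coe, AddMonoidHom.coe_coe, map_sub, map_add,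
    mapDomainRingHom_apply, mapDomain_single, QuotientGroup.mk'_apply, h, h', sub_self]

theorem exists_neg_coeff_of_mem_relAugKer {f : MonoidAlgebra ℤ π} (hf : f ∈ relAugKer G)
    {a : π} (ha : 0 < f.coeff a) : ∃ b : π, (b : π ⧸ G) = a ∧ f.coeff b < 0 :=
  Finsupp.exists_neg_of_mapDomain_eq_zero ((mem_relAugKer_iff G).mp hf) ha

theorem exists_descent_of_pos {f : MonoidAlgebra ℤ π} (hf : f ∈ selfConjEven π ⊓ relAugKer G)
    {a : π} (ha : 0 < f.coeff a) :
    ∃ f' ∈ selfConjEven π ⊓ relAugKer G,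
      f - f' ∈ normLikeSpan G ∧ f'.coeff.l1Norm < f.coeff.l1Norm := by
  obtain ⟨hE, hK⟩ := AddSubgroup.mem_inf.mp hf
  obtain ⟨b, hba, hb⟩ := exists_neg_coeff_of_mem_relAugKer G hK ha
  have hab : a ≠ b := by rintro rfl; omega
  have hainvb : a⁻¹ ≠ b := by rintro rfl; rw [hE.1 a] at hb; omega
  obtain ⟨hle₁, hlt₁⟩ := l1Norm_sub_invPair hE ha
  set f₁ := f - invPair a
  have hf₁ : f₁ ∈ selfConjEven π := sub_mem hE (invPair_mem_selfConjEven a)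
  have hb₁ : 0 < (-f₁).coeff b := by
    simp only [f₁, coeff_neg, coeff_sub, Finsupp.neg_apply, Finsupp.sub_apply,
      coeff_invPair_of_ne hab hainvb]
    omega
  obtain ⟨hle₂, hlt₂⟩ := l1Norm_sub_invPair (neg_mem hf₁) hb₁
  refine ⟨f - (invPair a - invPair b), sub_mem hf (AddSubgroup.mem_inf.mpr ⟨?_, ?_⟩), ?_, ?_⟩
  · exact sub_mem (invPair_mem_selfConjEven a) (invPair_mem_selfConjEven b)
  · exact invPair_sub_invPair_mem_relAugKer G hba.symm
  · rw [sub_sub_cancel]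
    exact invPair_sub_invPair_mem_normLikeSpan G (QuotientGroup.eq.mp hba)
  · have hf' : f - (invPair a - invPair b) = -(-f₁ - invPair b) := by simp only [f₁]; abel
    rw [hf', coeff_neg, Finsupp.l1Norm_neg]
    rw [coeff_neg, Finsupp.l1Norm_neg] at hle₂ hlt₂
    rcases eq_or_ne a 1 with rfl | ha1
    · have := hlt₂ (Ne.symm hab); omega
    · have := hlt₁ ha1; omega

theorem mem_normLikeSpan_of_mem_inf {f : MonoidAlgebra ℤ π}
    (hf : f ∈ selfConjEven π ⊓ relAugKer G) : f ∈ normLikeSpan G := by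
  induction hn : f.coeff.l1Norm using Nat.strong_induction_on generalizing f with
  | _ n ih =>
  obtain rfl | hne := eq_or_ne f 0
  · exact zero_mem _
  obtain ⟨a, ha⟩ : ∃ a, f.coeff a ≠ 0 := by
    simpa using Finsupp.ne_iff.mp (coeff_eq_zero.not.mpr hne)
  obtain ⟨f', hf', hsub, hlt⟩ : ∃ f' ∈ selfConjEven π ⊓ relAugKer G,
      f - f' ∈ normLikeSpan G ∧ f'.coeff.l1Norm < f.coeff.l1Norm := by
    rcases ha.lt_or_gt with hneg | hpos
    · obtain ⟨f', hf', hsub, hlt⟩ := exists_descent_of_pos G (neg_mem hf) (a := a)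
        (by simpa [coeff_neg] using hneg)
      refine ⟨-f', neg_mem hf', ?_, ?_⟩
      · convert neg_mem hsub using 1; abel
      · simpa only [coeff_neg, Finsupp.l1Norm_neg] using hlt
    · exact exists_descent_of_pos G hf hpos
  simpa using add_mem hsub (ih _ (hn ▸ hlt) hf' rfl)

end Descent

end NormLike

open NormLike in
/-- A self-conjugate, almost even element of the two-sided ideal generated by
{h − 1 : h ∈ G} is a ℤ-linear combination of norm-like elements
g₁(h−1)g₂ + g₂⁻¹(h⁻¹−1)g₁⁻¹. -/
theorem selfConjugate_ideal_element_is_sum_of_norm_like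
    (π : Type) [Group π] (G : Subgroup π) [G.Normal]
    (lam : MonoidAlgebra ℤ π)
    (hself : GRconj lam = lam)
    (heven : ∀ g : π, g ^ 2 = 1 → g ≠ 1 → Even (lam.coeff g))
    (hmem : lam ∈ AddSubgroup.closure
      {x : MonoidAlgebra ℤ π | ∃ (g₁ g₂ : π) (h : π), h ∈ G ∧
        x = MonoidAlgebra.of ℤ π g₁ * (MonoidAlgebra.of ℤ π h - 1) * MonoidAlgebra.of ℤ π g₂}) :
    lam ∈ AddSubgroup.closure
      {x : MonoidAlgebra ℤ π | ∃ (g₁ g₂ : π) (h : π), h ∈ G ∧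
        x = MonoidAlgebra.of ℤ π g₁ * (MonoidAlgebra.of ℤ π h - 1) * MonoidAlgebra.of ℤ π g₂
          + MonoidAlgebra.of ℤ π g₂⁻¹ * (MonoidAlgebra.of ℤ π h⁻¹ - 1) * MonoidAlgebra.of ℤ π g₁⁻¹} := by
  have hE : lam ∈ selfConjEven π := ⟨coeff_inv_eq_of_GRconj_eq hself, heven⟩
  exact mem_normLikeSpan_of_mem_inf G (AddSubgroup.mem_inf.mpr ⟨hE, closure_le_relAugKer G hmem⟩)
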